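/- Let A be a uniform algebra on a compact Hausdorff space X, let E ⊆ X be a weak peak set for A, and let h ∈ A satisfy |h(y)| ≤ 1 for every y ∈ E. Then there exists u ∈ A with ‖u‖ ≤ 1 such that u(y) = 1 for every y ∈ E and ‖hu‖ ≤ 1 (so hu ∈ A agrees with h on E and has supremum norm at most 1). -/

import Mathlib

open scoped ComplexConjugate

/-- A peaking function for the set `K` in a (sub)algebra `A` of `C(X, ℂ)`:
`f ∈ A`, `‖f‖ = 1`, `K = f⁻¹(1)` and `{x : |f(x)| = 1} = f⁻¹(1) = K`. -/
def IsPeakingFunction {X : Type*} [TopologicalSpace X] [CompactSpace X]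
    (A : Subalgebra ℂ C(X, ℂ)) (f : C(X, ℂ)) (K : Set X) : Prop :=
  f ∈ A ∧ ‖f‖ = 1 ∧ K = {x | f x = 1} ∧ {x | ‖f x‖ = 1} = K

/-- A peak set for `A`. -/
def IsPeakSet {X : Type*} [TopologicalSpace X] [CompactSpace X]
    (A : Subalgebra ℂ C(X, ℂ)) (K : Set X) : Prop :=
  ∃ f, IsPeakingFunction A f K

/-- A weak peak set for `A`: an intersection of a nonempty family of peak sets. -/
def IsWeakPeakSet {X : Type*} [TopologicalSpace X] [CompactSpace X]
    (A : Subalgebra ℂ C(X, ℂ)) (K : Set X) : Prop :=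
  ∃ S : Set (Set X), S.Nonempty ∧ (∀ E ∈ S, IsPeakSet A E) ∧ K = ⋂₀ S

/-- The Choquet boundary of a uniform algebra: the set of weak peak points. -/
def choquetBdry {X : Type*} [TopologicalSpace X] [CompactSpace X]
    (A : Subalgebra ℂ C(X, ℂ)) : Set X :=
  {x | IsWeakPeakSet A {x}}

/-- The unit sphere `S(A)` of `A`, as a subset of `C(X, ℂ)`. -/
def uaSphere {X : Type*} [TopologicalSpace X] [CompactSpace X]
    (A : Subalgebra ℂ C(X, ℂ)) : Set C(X, ℂ) :=
  {f | f ∈ A ∧ ‖f‖ = 1}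

/-- The set `F_{x,λ} = {f ∈ S(A) : f x = λ}`. -/
def uaSlice {X : Type*} [TopologicalSpace X] [CompactSpace X]
    (A : Subalgebra ℂ C(X, ℂ)) (x : X) (lam : ℂ) : Set C(X, ℂ) :=
  {f | f ∈ uaSphere A ∧ f x = lam}

/-!
For each `n`, a power of a product of finitely many peaking functions gives `gₙ ∈ A` with
`‖gₙ‖ ≤ 1`, `gₙ = 1` on `E` and `|h gₙ| ≤ 2⁻ⁿ⁻¹` wherever `|h| ≥ 1 + 2⁻ⁿ⁻¹`: the set where
`|h| < 1 + 2⁻ⁿ⁻¹` is an open neighbourhood of `E`, and by compactness a finite subfamily of the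
peak sets cutting out `E` already lies inside it. Then `u = ∑ 2⁻ⁿ⁻¹ gₙ` works. At a point where
`|h| > 1`, let `N` be least with `|h| ≥ 1 + 2⁻ᴺ⁻¹`; then `|h| < 1 + 2⁻ᴺ` and the series for `|h u|`
is small enough termwise on both sides of `N`.
-/

lemma hasSum_half_pow_succ {𝕜 : Type*} [RCLike 𝕜] :
    HasSum (fun n : ℕ => (1 / 2 : 𝕜) ^ (n + 1)) 1 := by
  have h := (hasSum_geometric_of_norm_lt_one (ξ := (1 / 2 : 𝕜)) (by norm_num)).mul_left (1 / 2)
  rw [show (1 / 2 : 𝕜) * (1 - 1 / 2)⁻¹ = 1 by norm_num] at h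
  simpa only [pow_succ'] using h

lemma hasSum_half_pow_succ_nat_add (N : ℕ) :
    HasSum (fun n : ℕ => (1 / 2 : ℝ) ^ (n + N + 1)) ((1 / 2) ^ N) := by
  have h := hasSum_half_pow_succ.mul_right ((1 / 2 : ℝ) ^ N)
  rw [one_mul] at h
  exact h.congr_fun fun n => by ring

lemma sum_range_half_pow_succ (N : ℕ) :
    ∑ n ∈ Finset.range N, (1 / 2 : ℝ) ^ (n + 1) = 1 - (1 / 2) ^ N := by
  linarith [hasSum_half_pow_succ.summable.sum_add_tsum_nat_add
      (f := fun n => (1 / 2 : ℝ) ^ (n + 1)) N,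
    (hasSum_half_pow_succ_nat_add N).tsum_eq, hasSum_half_pow_succ (𝕜 := ℝ).tsum_eq]

/-- With `t = 2⁻ᴺ`, the terms before `N` add up to at most `(1 + t)(1 - t)` and the others to at
most `t² / 2`. -/
lemma tsum_half_pow_mul_le_one_of_head_tail {r : ℝ} {a : ℕ → ℝ} (N : ℕ) (hr : 0 ≤ r)
    (ha1 : ∀ n, a n ≤ 1) (hsum : Summable fun n => (1 / 2 : ℝ) ^ (n + 1) * (r * a n))
    (hhead : 0 < N → r ≤ 1 + (1 / 2) ^ N)
    (htail : ∀ n, N ≤ n → r * a n ≤ (1 / 2) ^ (n + 1)) :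
    ∑' n, (1 / 2 : ℝ) ^ (n + 1) * (r * a n) ≤ 1 := by
  set t : ℝ := (1 / 2) ^ N
  have ht : 0 ≤ t := by positivity
  have hhead_le : ∑ n ∈ Finset.range N, (1 / 2 : ℝ) ^ (n + 1) * (r * a n) ≤ (1 + t) * (1 - t) := by
    rw [← sum_range_half_pow_succ, Finset.mul_sum]
    refine Finset.sum_le_sum fun n hn => ?_
    have := mul_le_of_le_one_right hr (ha1 n)
    have := hhead (Finset.mem_range.1 hn).pos
    nlinarith [pow_pos (one_half_pos (α := ℝ)) (n + 1)]
  have htail_term (i : ℕ) :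
      (1 / 2 : ℝ) ^ (i + N + 1) * (r * a (i + N)) ≤ t / 2 * (1 / 2) ^ (i + N + 1) := by
    have : (1 / 2 : ℝ) ^ (i + N + 1) ≤ t / 2 :=
      (pow_le_pow_of_le_one (by norm_num) (by norm_num) (by omega : N + 1 ≤ i + N + 1)).trans_eq
        (by rw [pow_succ]; ring)
    nlinarith [htail (i + N) (by omega), pow_pos (one_half_pos (α := ℝ)) (i + N + 1)]
  have htail_le : ∑' i, (1 / 2 : ℝ) ^ (i + N + 1) * (r * a (i + N)) ≤ t / 2 * t :=
    ((summable_nat_add_iff N).2 hsum).tsum_le_tsum htail_term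
      ((hasSum_half_pow_succ_nat_add N).mul_left _).summable |>.trans_eq
      ((hasSum_half_pow_succ_nat_add N).mul_left _).tsum_eq
  rw [← hsum.sum_add_tsum_nat_add N]
  nlinarith

lemma exists_hasSum_half_pow_mul_le_one {r : ℝ} {a : ℕ → ℝ} (hr : 0 ≤ r) (ha0 : ∀ n, 0 ≤ a n)
    (ha1 : ∀ n, a n ≤ 1)
    (hsmall : ∀ n, 1 + (1 / 2 : ℝ) ^ (n + 1) ≤ r → r * a n ≤ (1 / 2) ^ (n + 1)) :
    ∃ b ≤ 1, HasSum (fun n => (1 / 2 : ℝ) ^ (n + 1) * (r * a n)) b := by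
  have hterm (n : ℕ) : (1 / 2 : ℝ) ^ (n + 1) * (r * a n) ≤ (1 / 2) ^ (n + 1) * r :=
    mul_le_mul_of_nonneg_left (mul_le_of_le_one_right hr (ha1 n)) (by positivity)
  have hsum : Summable fun n => (1 / 2 : ℝ) ^ (n + 1) * (r * a n) :=
    .of_nonneg_of_le (fun n => by have := ha0 n; positivity) hterm
      (hasSum_half_pow_succ.summable.mul_right r)
  refine ⟨_, ?_, hsum.hasSum⟩
  rcases le_or_gt r 1 with hr1 | hr1
  · calc ∑' n, (1 / 2 : ℝ) ^ (n + 1) * (r * a n) ≤ ∑' n : ℕ, (1 / 2 : ℝ) ^ (n + 1) :=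
          hsum.tsum_le_tsum (fun n => (hterm n).trans (mul_le_of_le_one_right (by positivity) hr1))
            hasSum_half_pow_succ.summable
      _ = 1 := hasSum_half_pow_succ.tsum_eq
  have hex : ∃ n, 1 + (1 / 2 : ℝ) ^ (n + 1) ≤ r := by
    obtain ⟨n, hn⟩ := exists_pow_lt_of_lt_one (sub_pos.2 hr1) (by norm_num : (1 / 2 : ℝ) < 1)
    have := pow_le_pow_of_le_one (by norm_num : (0 : ℝ) ≤ 1 / 2) (by norm_num) (n.le_add_right 1)
    exact ⟨n, by linarith⟩
  refine tsum_half_pow_mul_le_one_of_head_tail (Nat.find hex) hr ha1 hsum (fun hN => ?_)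
    fun n hn => hsmall n ?_
  · have := not_le.1 (Nat.find_min hex (Nat.sub_one_lt hN.ne'))
    rw [Nat.sub_add_cancel (by omega)] at this
    exact this.le
  · have := pow_le_pow_of_le_one (by norm_num : (0 : ℝ) ≤ 1 / 2) (by norm_num)
      (Nat.add_le_add_right hn 1)
    linarith [Nat.find_spec hex]

lemma IsCompact.exists_pow_le_of_lt_one {X : Type*} [TopologicalSpace X] {s : Set X}
    (hs : IsCompact s) {φ : X → ℝ} (hφ : ContinuousOn φ s) (h0 : ∀ x ∈ s, 0 ≤ φ x)
    (h1 : ∀ x ∈ s, φ x < 1) {δ : ℝ} (hδ : 0 < δ) : ∃ m : ℕ, ∀ x ∈ s, φ x ^ m ≤ δ := by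
  obtain ⟨c, hc1, hφc⟩ := hs.exists_forall_le' hφ.neg (a := -1) fun x hx => neg_lt_neg (h1 x hx)
  obtain ⟨m, hm⟩ := exists_pow_lt_of_lt_one hδ (neg_lt.1 hc1)
  refine ⟨m, fun x hx => (pow_le_pow_left₀ (h0 x hx) ?_ m).trans hm.le⟩
  linarith [show c ≤ -φ x from hφc x hx]

section PeakSets

variable {X : Type*} [TopologicalSpace X] [CompactSpace X] {A : Subalgebra ℂ C(X, ℂ)}
  {f : C(X, ℂ)} {K : Set X}

namespace IsPeakingFunction

lemma norm_apply_le_one (hf : IsPeakingFunction A f K) (x : X) : ‖f x‖ ≤ 1 :=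
  hf.2.1 ▸ f.norm_coe_le_norm x

lemma apply_eq_one (hf : IsPeakingFunction A f K) {x : X} (hx : x ∈ K) : f x = 1 := by
  rw [hf.2.2.1] at hx
  exact hx

lemma norm_apply_lt_one (hf : IsPeakingFunction A f K) {x : X} (hx : x ∉ K) : ‖f x‖ < 1 :=
  (hf.norm_apply_le_one x).lt_of_ne fun h => hx (hf.2.2.2 ▸ h)

end IsPeakingFunction

lemma IsPeakSet.isClosed (hK : IsPeakSet A K) : IsClosed K := by
  obtain ⟨f, -, -, rfl, -⟩ := hK
  exact isClosed_eq f.continuous continuous_const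

lemma IsWeakPeakSet.exists_norm_lt_one_of_notMem {E U : Set X} (hE : IsWeakPeakSet A E)
    (hU : IsOpen U) (hEU : E ⊆ U) :
    ∃ f ∈ A, (∀ x, ‖f x‖ ≤ 1) ∧ (∀ y ∈ E, f y = 1) ∧ ∀ x ∉ U, ‖f x‖ < 1 := by
  classical
  obtain ⟨S, -, hS, rfl⟩ := hE
  choose φ hφ using fun K : S => hS K K.2
  obtain ⟨T, hT⟩ := hU.isClosed_compl.isCompact.elim_finite_subfamily_closed (fun K : S => K.1)
    (fun K => (hS K K.2).isClosed) (by
      rw [← Set.sInter_eq_iInter, Set.eq_empty_iff_forall_notMem]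
      exact fun x hx => hx.1 (hEU hx.2))
  have hle : ∀ x, ∏ K ∈ T, ‖φ K x‖ ≤ 1 := fun x =>
    Finset.prod_le_one (fun _ _ => norm_nonneg _) fun K _ => (hφ K).norm_apply_le_one x
  refine ⟨∏ K ∈ T, φ K, prod_mem fun K _ => (hφ K).1, fun x => ?_, fun y hy => ?_, fun x hx => ?_⟩
  · simpa [ContinuousMap.prod_apply, norm_prod] using hle x
  · simp only [ContinuousMap.prod_apply]
    exact Finset.prod_eq_one fun K _ => (hφ K).apply_eq_one (hy K K.2)
  · obtain ⟨K, hKT, hxK⟩ : ∃ K ∈ T, x ∉ K.1 := by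
      by_contra! h
      exact (Set.eq_empty_iff_forall_notMem.1 hT) x ⟨hx, Set.mem_iInter₂.2 h⟩
    rw [ContinuousMap.prod_apply, norm_prod, ← Finset.mul_prod_erase T _ hKT]
    calc ‖φ K x‖ * ∏ L ∈ T.erase K, ‖φ L x‖ ≤ ‖φ K x‖ * 1 := by
          gcongr
          exact Finset.prod_le_one (fun _ _ => norm_nonneg _) fun L _ => (hφ L).norm_apply_le_one x
      _ < 1 := by rw [mul_one]; exact (hφ K).norm_apply_lt_one hxK

lemma IsWeakPeakSet.exists_norm_le_of_notMem {E U : Set X} (hE : IsWeakPeakSet A E)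
    (hU : IsOpen U) (hEU : E ⊆ U) {δ : ℝ} (hδ : 0 < δ) :
    ∃ g ∈ A, ‖g‖ ≤ 1 ∧ (∀ y ∈ E, g y = 1) ∧ ∀ x ∉ U, ‖g x‖ ≤ δ := by
  obtain ⟨f, hfA, hf1, hfE, hfU⟩ := hE.exists_norm_lt_one_of_notMem hU hEU
  obtain ⟨m, hm⟩ := hU.isClosed_compl.isCompact.exists_pow_le_of_lt_one
    (map_continuous f).norm.continuousOn (fun x _ => norm_nonneg (f x)) hfU hδ
  refine ⟨f ^ m, pow_mem hfA m, (ContinuousMap.norm_le _ zero_le_one).2 fun x => ?_,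
    fun y hy => by simp [hfE y hy], fun x hx => by simpa using hm x hx⟩
  simpa using pow_le_one₀ (norm_nonneg _) (hf1 x)

lemma IsWeakPeakSet.exists_norm_mul_le {E : Set X} (hE : IsWeakPeakSet A E) (h : C(X, ℂ))
    (hbd : ∀ y ∈ E, ‖h y‖ ≤ 1) {ε : ℝ} (hε : 0 < ε) :
    ∃ g ∈ A, ‖g‖ ≤ 1 ∧ (∀ y ∈ E, g y = 1) ∧ ∀ x, 1 + ε ≤ ‖h x‖ → ‖h x‖ * ‖g x‖ ≤ ε := by
  obtain ⟨g, hgA, hg1, hgE, hgU⟩ := hE.exists_norm_le_of_notMem (U := {x | ‖h x‖ < 1 + ε})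
    (isOpen_lt (map_continuous h).norm continuous_const)
    (fun y hy => show ‖h y‖ < 1 + ε by linarith [hbd y hy])
    (div_pos hε (by positivity : 0 < ‖h‖ + 1))
  refine ⟨g, hgA, hg1, hgE, fun x hx => ?_⟩
  calc ‖h x‖ * ‖g x‖ ≤ (‖h‖ + 1) * (ε / (‖h‖ + 1)) :=
        mul_le_mul (by linarith [h.norm_coe_le_norm x]) (hgU x (not_lt.2 hx)) (norm_nonneg _)
          (by positivity)
    _ = ε := mul_div_cancel₀ _ (by positivity)

end PeakSets

theorem exists_multiplier_of_weak_peak_set_general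
    {X : Type*} [TopologicalSpace X] [CompactSpace X]
    (A : Subalgebra ℂ C(X, ℂ)) (hA : IsClosed (A : Set C(X, ℂ)))
    (E : Set X) (hE : IsWeakPeakSet A E)
    (h : C(X, ℂ)) (hbd : ∀ y ∈ E, ‖h y‖ ≤ 1) :
    ∃ u ∈ A, ‖u‖ ≤ 1 ∧ (∀ y ∈ E, u y = 1) ∧ ‖h * u‖ ≤ 1 := by
  choose g hgA hg1 hgE hgh using fun n : ℕ =>
    hE.exists_norm_mul_le h hbd (pow_pos (one_half_pos (α := ℝ)) (n + 1))
  have hnorm_half (n : ℕ) : ‖(1 / 2 : ℂ) ^ (n + 1)‖ = (1 / 2 : ℝ) ^ (n + 1) := by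
    rw [norm_pow, norm_div, norm_one, Complex.norm_two]
  have hterm (n : ℕ) : ‖(1 / 2 : ℂ) ^ (n + 1) • g n‖ ≤ (1 / 2 : ℝ) ^ (n + 1) := by
    rw [norm_smul, hnorm_half]
    exact mul_le_of_le_one_right (by positivity) (hg1 n)
  set u := ∑' n, (1 / 2 : ℂ) ^ (n + 1) • g n
  have hu (x : X) : HasSum (fun n => (1 / 2 : ℂ) ^ (n + 1) * g n x) (u x) :=
    (Summable.of_norm_bounded hasSum_half_pow_succ.summable hterm).hasSum.map
      (ContinuousMap.evalCLM ℂ x) (ContinuousMap.evalCLM ℂ x).continuous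
  refine ⟨u, tsum_mem hA fun n => A.smul_mem (hgA n) _,
    tsum_of_norm_bounded hasSum_half_pow_succ hterm,
    fun y hy => (hu y).unique (hasSum_half_pow_succ.congr_fun fun n => by rw [hgE n y hy, mul_one]),
    (ContinuousMap.norm_le _ zero_le_one).2 fun x => ?_⟩
  obtain ⟨b, hb1, hb⟩ := exists_hasSum_half_pow_mul_le_one (norm_nonneg (h x))
    (fun n => norm_nonneg (g n x)) (fun n => ((g n).norm_coe_le_norm x).trans (hg1 n))
    fun n => hgh n x
  refine (((hu x).mul_left (h x)).norm_le_of_bounded hb fun n => le_of_eq ?_).trans hb1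
  rw [norm_mul, norm_mul, hnorm_half]
  ring

/-- If `E` is a weak peak set for a uniform algebra `A` and `h ∈ A` satisfies `|h| ≤ 1`
on `E`, then there is `u ∈ A` with `‖u‖ ≤ 1`, `u = 1` on `E` and `‖h·u‖ ≤ 1`. -/
theorem exists_multiplier_of_weak_peak_set
    {X : Type*} [TopologicalSpace X] [CompactSpace X] [T2Space X] [Nonempty X]
    (A : Subalgebra ℂ C(X, ℂ)) (hA : IsClosed (A : Set C(X, ℂ)))
    (hAsep : ∀ x₁ x₂ : X, x₁ ≠ x₂ → ∃ f ∈ A, f x₁ ≠ f x₂)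
    (E : Set X) (hE : IsWeakPeakSet A E)
    (h : C(X, ℂ)) (hh : h ∈ A) (hbd : ∀ y ∈ E, ‖h y‖ ≤ 1) :
    ∃ u ∈ A, ‖u‖ ≤ 1 ∧ (∀ y ∈ E, u y = 1) ∧ ‖h * u‖ ≤ 1 :=
  exists_multiplier_of_weak_peak_set_general A hA E hE h hbd
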